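/- arXiv:2410.06364 — 2 statements merged into one kernel-verified Lean document; each statement's English description precedes it below -/
import Mathlib

section
/- For a balanced random-fold hash mapping each of n coordinates to one of k = n/α buckets (each bucket containing exactly α coordinates, mapping uniformly random with respect to the vector), the expected squared error of approximating a vector δ ∈ ℝⁿ by replacing each coordinate with the (sign-corrected) average of its bucket equals ((α−1)/α)·‖δ‖₂². -/
/-!
The signs `sgn (g j)` are orthonormal: `∑_g sgn (g i) sgn (g j) = 2ⁿ [i = j]`, so
`∑_g (∑_j sgn (g j) x j)² = 2ⁿ ‖x‖²`. Multiplying the error at `i` by `sgn (g i)` makes it such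
a signed sum over the bucket `B` of `i`, with coefficients `δ i - δ i / α` at `i` and `-δ j / α`
elsewhere, so its average is `(1 - 2/α) δ i² + α⁻² ∑_{j ∈ B} δ j²`. Summing over `i`, each `δ j²`
is counted once for each of the `α` members of its bucket, which gives `(1 - 1/α) ‖δ‖²`.
-/

open Finset

/-- Sign of a boolean: `true ↦ 1`, `false ↦ -1`. -/
noncomputable def sgn (b : Bool) : ℝ := if b then 1 else -1

lemma sgn_mul_self (b : Bool) : sgn b * sgn b = 1 := by cases b <;> simp [sgn]

lemma sgn_not (b : Bool) : sgn (!b) = -sgn b := by cases b <;> simp [sgn]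

section Rademacher

variable {ι : Type*} [Fintype ι] [DecidableEq ι]

lemma sum_sgn_mul_sgn (i j : ι) :
    ∑ g : ι → Bool, sgn (g i) * sgn (g j) = if i = j then (2 : ℝ) ^ Fintype.card ι else 0 := by
  split_ifs with hij
  · subst hij
    simp [sgn_mul_self]
  · -- flipping the sign at `i` negates each term
    refine sum_ninvolution (fun g => Function.update g i !(g i)) (fun g => ?_)
      (fun g _ hg => by simpa using congr_fun hg i) (fun _ => mem_univ _) (fun g => by simp)
    simp [Function.update_of_ne (Ne.symm hij), sgn_not]

lemma sum_sq_sum_sgn_mul (s : Finset ι) (x : ι → ℝ) :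
    ∑ g : ι → Bool, (∑ j ∈ s, sgn (g j) * x j) ^ 2
      = (2 : ℝ) ^ Fintype.card ι * ∑ j ∈ s, x j ^ 2 := by
  calc ∑ g : ι → Bool, (∑ j ∈ s, sgn (g j) * x j) ^ 2
      = ∑ j ∈ s, ∑ j' ∈ s, x j * x j' * ∑ g : ι → Bool, sgn (g j) * sgn (g j') := by
        simp_rw [sq, sum_mul_sum, mul_sum]
        rw [sum_comm]
        refine sum_congr rfl fun j _ => ?_
        rw [sum_comm]
        exact sum_congr rfl fun j' _ => sum_congr rfl fun g _ => by ring
    _ = (2 : ℝ) ^ Fintype.card ι * ∑ j ∈ s, x j ^ 2 := by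
        simp_rw [sum_sgn_mul_sgn, mul_ite, mul_zero, sum_ite_eq, mul_sum]
        exact sum_congr rfl fun j hj => by rw [if_pos hj]; ring

lemma sum_sq_sub_sgn_mul_sum_bucket {B : Finset ι} {i : ι} (hi : i ∈ B) (c : ℝ) (δ : ι → ℝ) :
    ∑ g : ι → Bool, (δ i - sgn (g i) * c * ∑ j ∈ B, sgn (g j) * δ j) ^ 2
      = (2 : ℝ) ^ Fintype.card ι * ((1 - 2 * c) * δ i ^ 2 + c ^ 2 * ∑ j ∈ B, δ j ^ 2) := by
  set x : ι → ℝ := fun j => (if j = i then δ i else 0) - c * δ j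
  have error_eq (g : ι → Bool) :
      (δ i - sgn (g i) * c * ∑ j ∈ B, sgn (g j) * δ j) ^ 2 = (∑ j ∈ B, sgn (g j) * x j) ^ 2 := by
    have hsum : ∑ j ∈ B, sgn (g j) * x j = sgn (g i) * δ i - c * ∑ j ∈ B, sgn (g j) * δ j := by
      simp only [x, mul_sub, sum_sub_distrib, mul_ite, mul_zero, sum_ite_eq', if_pos hi, mul_sum]
      exact congrArg _ (sum_congr rfl fun j _ => by ring)
    rw [hsum]
    linear_combination (c ^ 2 * (∑ j ∈ B, sgn (g j) * δ j) ^ 2 - δ i ^ 2) * sgn_mul_self (g i)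
  have sum_x_sq : ∑ j ∈ B, x j ^ 2 = (1 - 2 * c) * δ i ^ 2 + c ^ 2 * ∑ j ∈ B, δ j ^ 2 := by
    simp only [x, sub_sq, ite_pow, mul_ite, ite_mul, sum_add_distrib, sum_sub_distrib, mul_pow,
      mul_sum, ne_eq, OfNat.ofNat_ne_zero, not_false_eq_true, zero_pow, mul_zero, zero_mul,
      sum_ite_eq', if_pos hi]
    ring
  simp_rw [error_eq, sum_sq_sum_sgn_mul, sum_x_sq]

end Rademacher

lemma sum_sum_fiber_eq_card_mul {ι κ : Type*} [Fintype ι] [DecidableEq κ] (h : ι → κ) {α : ℕ}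
    (hbal : ∀ b : κ, #{i | h i = b} = α) (f : ι → ℝ) :
    ∑ i, ∑ j ∈ {j | h j = h i}, f j = α * ∑ j, f j := by
  simp_rw [sum_filter]
  rw [sum_comm, mul_sum]
  refine sum_congr rfl fun j _ => ?_
  simp_rw [eq_comm (a := h j), ← sum_filter, sum_const, hbal, nsmul_eq_mul]

theorem sketch_expected_error_general
    (n α k : ℕ) (hα : 0 < α)
    (h : Fin n → Fin k)
    (hbal : ∀ j : Fin k, (Finset.univ.filter (fun i => h i = j)).card = α)
    (δ : Fin n → ℝ) :
    (1 / (2 : ℝ) ^ n) *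
      ∑ g : Fin n → Bool, ∑ i : Fin n,
        (δ i - sgn (g i) * (1 / (α : ℝ)) *
          ∑ j ∈ Finset.univ.filter (fun j => h j = h i), sgn (g j) * δ j) ^ 2
    = (((α : ℝ) - 1) / (α : ℝ)) * ∑ i : Fin n, (δ i) ^ 2 := by
  rw [sum_comm, sum_congr rfl fun i _ =>
      sum_sq_sub_sgn_mul_sum_bucket (B := {j | h j = h i}) (by simp) _ δ,
    Fintype.card_fin, ← mul_sum, sum_add_distrib, ← mul_sum, ← mul_sum,
    sum_sum_fiber_eq_card_mul h hbal]
  have hα' : (α : ℝ) ≠ 0 := by positivity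
  field_simp
  ring

/-- For a balanced random-fold hash mapping each of `n` coordinates to one of `k = n/α`
buckets (each bucket containing exactly `α` coordinates), the expected squared error
(over i.i.d. uniform random signs `g`) of approximating `δ ∈ ℝⁿ` by replacing each
coordinate with the sign-corrected average of its bucket equals `((α-1)/α) * ‖δ‖₂²`. -/
theorem sketch_expected_error
    (n α k : ℕ) (hα : 0 < α) (hn : n = α * k)
    (h : Fin n → Fin k)
    (hbal : ∀ j : Fin k, (Finset.univ.filter (fun i => h i = j)).card = α)
    (δ : Fin n → ℝ) :
    (1 / (2 : ℝ) ^ n) *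
      ∑ g : Fin n → Bool, ∑ i : Fin n,
        (δ i - sgn (g i) * (1 / (α : ℝ)) *
          ∑ j ∈ Finset.univ.filter (fun j => h j = h i), sgn (g j) * δ j) ^ 2
    = (((α : ℝ) - 1) / (α : ℝ)) * ∑ i : Fin n, (δ i) ^ 2 :=
  sketch_expected_error_general n α k hα h hbal δ
end

section
/- (Main theorem, error comparison) Let Δ be n×n with squared singular values i^{−η}, η ∈ [0,1), and compression factor α ∈ ℕ with α | n, α ≥ 2. The low-rank approximation error with n²/α parameters (rank n/(2α)) is ‖Δ‖_F² − Σ_{i=1}^{n/(2α)} i^{−η}, and the expected random-fold sketching error is ‖Δ‖_F² − (1/α) Σ_{i=1}^n i^{−η}. For all sufficiently large n, the sketching error is smaller whenever η < 1 − log(α)/log(2α), i.e., (1/α) Σ_{i=1}^n i^{−η} > Σ_{i=1}^{n/(2α)} i^{−η} holds eventually. -/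
/-!
With `p = 1 - η ∈ (0, 1]`, concavity of `x ↦ x ^ p` squeezes the increment
`(k + 1) ^ p - k ^ p` between `p (k + 1) ^ (-η)` and `p k ^ (-η)`; telescoping gives
`(n ^ p - 1) / p ≤ ∑_{i ≤ n} i ^ (-η) ≤ n ^ p / p`. Hence the low-rank sum is at most
`(n / 2α) ^ p / p` while the sketching side is at least `(n ^ p - 1) / (α p)`, and the ratio of
the leading terms is `α / (2α) ^ p`, which is `< 1` exactly when `η < 1 - log α / log (2α)`.
-/

open Finset Filter

theorem Real.rpow_add_le_rpow_add_mul_rpow_sub_one {x s p : ℝ} (hx : 0 < x) (hs : -x ≤ s)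
    (hp0 : 0 ≤ p) (hp1 : p ≤ 1) : (x + s) ^ p ≤ x ^ p + p * x ^ (p - 1) * s := by
  have hsx : -1 ≤ s / x := by rwa [le_div_iff₀ hx, neg_one_mul]
  calc (x + s) ^ p = x ^ p * (1 + s / x) ^ p := by
        rw [← Real.mul_rpow hx.le (by linarith), mul_add, mul_one, mul_div_cancel₀ _ hx.ne']
    _ ≤ x ^ p * (1 + p * (s / x)) := by
        gcongr; exact rpow_one_add_le_one_add_mul_self hsx hp0 hp1
    _ = x ^ p + p * x ^ (p - 1) * s := by
        rw [Real.rpow_sub_one hx.ne']; field_simp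

section RpowNegSum

variable {η : ℝ}

theorem sum_Icc_rpow_neg_le (hη0 : 0 ≤ η) (hη1 : η < 1) (m : ℕ) :
    ∑ i ∈ Icc 1 m, (i : ℝ) ^ (-η) ≤ (m : ℝ) ^ (1 - η) / (1 - η) := by
  have hp : 0 < 1 - η := by linarith
  induction m with
  | zero => simp [Real.zero_rpow hp.ne']
  | succ m ih =>
    have hinc := Real.rpow_add_le_rpow_add_mul_rpow_sub_one (x := (m : ℝ) + 1) (s := -1)
      (by positivity) (by linarith [(m.cast_nonneg : (0 : ℝ) ≤ m)]) hp.le (by linarith)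
    rw [sub_sub_cancel_left, add_neg_cancel_right] at hinc
    rw [sum_Icc_succ_top (by omega), Nat.cast_succ, le_div_iff₀ hp]
    rw [le_div_iff₀ hp] at ih
    linarith

theorem rpow_sub_one_div_le_sum_Icc_rpow_neg (hη0 : 0 ≤ η) (hη1 : η < 1) (n : ℕ) :
    ((n : ℝ) ^ (1 - η) - 1) / (1 - η) ≤ ∑ i ∈ Icc 1 n, (i : ℝ) ^ (-η) := by
  have hp : 0 < 1 - η := by linarith
  suffices h : ((n + 1 : ℝ) ^ (1 - η) - 1) / (1 - η) ≤ ∑ i ∈ Icc 1 n, (i : ℝ) ^ (-η) from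
    le_trans (by gcongr; linarith) h
  induction n with
  | zero => simp
  | succ n ih =>
    have hinc := Real.rpow_add_le_rpow_add_mul_rpow_sub_one (x := (n : ℝ) + 1) (s := 1)
      (by positivity) (by linarith [(n.cast_nonneg : (0 : ℝ) ≤ n)]) hp.le (by linarith)
    rw [sub_sub_cancel_left] at hinc
    rw [sum_Icc_succ_top (by omega), Nat.cast_succ, div_le_iff₀ hp]
    rw [div_le_iff₀ hp] at ih
    linarith

end RpowNegSum

theorem eventually_div_rpow_lt_rpow_sub_one_div {a b p : ℝ} (ha : 0 < a) (hb : 0 < b)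
    (hp : 0 < p) (hab : a < b ^ p) : ∀ᶠ x in atTop, (x / b) ^ p < (x ^ p - 1) / a := by
  have hbp : 0 < b ^ p := by positivity
  filter_upwards [(tendsto_rpow_atTop hp).eventually_gt_atTop (b ^ p / (b ^ p - a)),
    eventually_ge_atTop 0] with x hx hx0
  rw [Real.div_rpow hx0 hb.le, div_lt_div_iff₀ hbp ha]
  rw [div_lt_iff₀ (by linarith)] at hx
  linarith

/-- (Main theorem, error comparison) Let `Δ` be `n×n` with squared singular values
`i^(−η)`, `η ∈ [0,1)`, and compression factor `α ∈ ℕ`, `α ≥ 2`, `α ∣ n`. The low-rank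
error with `n²/α` parameters (rank `n/(2α)`) is `‖Δ‖_F² − ∑_{i=1}^{n/(2α)} i^(−η)` and the
expected sketching error is `‖Δ‖_F² − (1/α)∑_{i=1}^n i^(−η)`. If
`η < 1 − log α / log (2α)`, then for all sufficiently large `n` the sketching error is
smaller: `(1/α) ∑_{i=1}^n i^(−η) > ∑_{i=1}^{n/(2α)} i^(−η)`. -/
theorem sketching_beats_low_rank_eventually (α : ℕ) (hα : 2 ≤ α) (η : ℝ)
    (hη0 : 0 ≤ η) (hη1 : η < 1)
    (hη : η < 1 - Real.log (α : ℝ) / Real.log (2 * (α : ℝ))) :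
    ∃ N : ℕ, ∀ n : ℕ, N ≤ n → α ∣ n →
      (∑ i ∈ Finset.Icc 1 (n / (2 * α)), (i : ℝ) ^ (-η))
        < (1 / (α : ℝ)) * ∑ i ∈ Finset.Icc 1 n, (i : ℝ) ^ (-η) := by
  have hp : 0 < 1 - η := by linarith
  have hα0 : (0 : ℝ) < α := by positivity
  have hα_lt : (α : ℝ) < (2 * α) ^ (1 - η) := by
    have hlog : 0 < Real.log (2 * α) := Real.log_pos (by norm_cast; omega)
    rw [Real.lt_rpow_iff_log_lt hα0 (by positivity), ← div_lt_iff₀ hlog]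
    linarith
  obtain ⟨N, hN⟩ := eventually_atTop.1 <| tendsto_natCast_atTop_atTop.eventually <|
    eventually_div_rpow_lt_rpow_sub_one_div hα0 (by positivity) hp hα_lt
  refine ⟨N, fun n hn _ => ?_⟩
  calc ∑ i ∈ Icc 1 (n / (2 * α)), (i : ℝ) ^ (-η)
      ≤ ((n / (2 * α) : ℕ) : ℝ) ^ (1 - η) / (1 - η) := sum_Icc_rpow_neg_le hη0 hη1 _
    _ ≤ ((n : ℝ) / (2 * α)) ^ (1 - η) / (1 - η) := by
        gcongr; exact_mod_cast Nat.cast_div_le (α := ℝ)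
    _ < (1 / α) * (((n : ℝ) ^ (1 - η) - 1) / (1 - η)) := by
        rw [one_div_mul_eq_div, div_right_comm]
        exact div_lt_div_of_pos_right (hN n hn) hp
    _ ≤ (1 / α) * ∑ i ∈ Icc 1 n, (i : ℝ) ^ (-η) := by
        gcongr; exact rpow_sub_one_div_le_sum_Icc_rpow_neg hη0 hη1 n
end
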